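/- Indexed forests with support contained in the positive integers are in bijection with finitely supported sequences of nonnegative integers indexed by positive integers, via the map sending a forest F to the vector c(F) where c_i counts the internal nodes v of F whose leftmost descendant (obtained by following left edges down) has canonical label i. -/

import Mathlib

/-!
The `ρ`-multiset of a tree of size `n` whose labels start at `a` lies in `[a, a + n)`, has `n`
elements, and satisfies a ballot condition: at least `k` of its elements are `< a + k`.
Conversely such a multiset comes from exactly one tree. Its least element `a` is the root's
`ρ`-value, and after removing it the ballot condition first becomes tight at `a + |l| + 1`,
where `|l|` is the size of the left subtree; cutting there gives the multisets of the two
subtrees, which then determine them recursively. A forest is handled in the same way: the least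
element of `c(F)` is where the first tree starts, and that tree ends at the first point `a + n`
where the ballot condition fails, which is exactly where the gap before the next tree is.
-/

/-- Plane binary trees. `leaf` is a leaf, `node l r` an internal node. -/
inductive BT where
  | leaf : BT
  | node : BT → BT → BT
deriving DecidableEq

/-- Number of internal nodes. -/
def BT.size : BT → ℕ
  | .leaf => 0
  | .node l r => l.size + r.size + 1

/-- Multiset of values `ρ_F(v)` (canonical label of the leftmost descendant,
reached by following left edges) over the internal nodes of a tree whose
inorder canonical labels start at `a`. -/
def BT.rhoMS : BT → ℤ → Multiset ℤ
  | .leaf, _ => 0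
  | .node l r, a => a ::ₘ (l.rhoMS a + r.rhoMS (a + l.size + 1))

/-- Multiset of canonical labels of internal nodes whose left child is a leaf
("left support"). -/
def BT.lsuppMS : BT → ℤ → Multiset ℤ
  | .leaf, _ => 0
  | .node l r, a =>
      (if l = BT.leaf then ({a} : Multiset ℤ) else 0) + l.lsuppMS a
        + r.lsuppMS (a + l.size + 1)

/-- The flagged generating polynomial of a binary tree with inorder labels
starting at `a`, where every label is at least `lo` (lower bound transmitted
from the parent), at most the `ρ`-value of the node, labels weakly increase
down left edges and strictly increase down right edges. The variables are
`x_1, x_2, …` (the variable `X 0` is unused). -/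
noncomputable def BT.polyAux : BT → ℤ → ℕ → MvPolynomial ℕ ℚ
  | .leaf, _, _ => 1
  | .node l r, a, lo =>
      ∑ k ∈ Finset.Icc lo a.toNat,
        MvPolynomial.X k * l.polyAux a k * r.polyAux (a + l.size + 1) (k + 1)

/-- The forest polynomial of a single indexed tree with support starting at `a`. -/
noncomputable def BT.poly (t : BT) (a : ℤ) : MvPolynomial ℕ ℚ := t.polyAux a 1

/-- An indexed forest: a list of binary trees together with the starting points
of their supports, the supports being maximal intervals (consecutive supports
leave a gap of at least one integer). -/
structure IndexedForest where
  trees : List (ℤ × BT)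
  nonempty : ∀ p ∈ trees, p.2 ≠ BT.leaf
  gaps : trees.Chain' (fun p q => p.1 + (p.2.size : ℤ) + 1 ≤ q.1)

/-- The support of an indexed forest, as a set of integers. -/
def IndexedForest.Supp (F : IndexedForest) : Set ℤ :=
  {i | ∃ p ∈ F.trees, p.1 ≤ i ∧ i < p.1 + (p.2.size : ℤ)}

/-- The multiset of `ρ_F`-values of all internal nodes of `F`. -/
def IndexedForest.rhoMS (F : IndexedForest) : Multiset ℤ :=
  (F.trees.map (fun p => p.2.rhoMS p.1)).sum

/-- The `ℕ`-vector `c(F)`: `c_i` counts internal nodes with `ρ_F`-value `i`. -/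
def cOf (F : IndexedForest) : ℤ → ℕ := fun i => F.rhoMS.count i

/-- The multiset of left-support labels of `F`. -/
def IndexedForest.lsuppMS (F : IndexedForest) : Multiset ℤ :=
  (F.trees.map (fun p => p.2.lsuppMS p.1)).sum

/-- Forest polynomial of a list of located trees. -/
noncomputable def polyL (ts : List (ℤ × BT)) : MvPolynomial ℕ ℚ :=
  (ts.map (fun p => p.2.poly p.1)).prod

/-- The forest polynomial of an indexed forest. -/
noncomputable def IndexedForest.poly (F : IndexedForest) : MvPolynomial ℕ ℚ :=
  polyL F.trees

/-- Number of internal nodes of a forest. -/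
def IndexedForest.size (F : IndexedForest) : ℕ :=
  (F.trees.map (fun p => p.2.size)).sum

open Multiset

lemma countP_lt_mono (m : Multiset ℤ) {b b' : ℤ} (h : b ≤ b') :
    m.countP (· < b) ≤ m.countP (· < b') := by
  simp only [countP_eq_card_filter]
  exact card_le_card (monotone_filter_right m fun _ hx => hx.trans_le h)

lemma countP_lt_add_one (m : Multiset ℤ) (b : ℤ) :
    m.countP (· < b + 1) = m.countP (· < b) + m.count b := by
  induction m using Multiset.induction_on with
  | empty => simp
  | cons x m ih =>
    simp only [countP_cons, count_cons, ih]
    split_ifs <;> omega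

lemma filter_lt_add_of_lt_of_le {L R : Multiset ℤ} {b : ℤ} (hL : ∀ x ∈ L, x < b)
    (hR : ∀ x ∈ R, b ≤ x) :
    (L + R).filter (· < b) = L ∧ (L + R).filter (fun x => ¬ x < b) = R := by
  have hR' : ∀ x ∈ R, ¬ x < b := fun x hx => not_lt.2 (hR x hx)
  have hL' : ∀ x ∈ L, ¬ ¬ x < b := fun x hx => not_not.2 (hL x hx)
  simp only [filter_add, filter_eq_self.2 hL, filter_eq_nil.2 hR', filter_eq_self.2 hR',
    filter_eq_nil.2 hL', add_zero, zero_add, and_self]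

/-- The ballot condition characterising the `ρ`-multisets of trees of size `n` whose labels
start at `a`. -/
def IsBallot (m : Multiset ℤ) (a : ℤ) (n : ℕ) : Prop :=
  card m = n ∧ (∀ x ∈ m, a ≤ x ∧ x < a + n) ∧ ∀ k ≤ n, k ≤ m.countP (· < a + k)

/-- Failure of the ballot condition at `j + 1` forces `a + j ∉ m`, which leaves the gap. -/
lemma isBallot_filter_of_countP_le {m : Multiset ℤ} {a : ℤ} {j : ℕ} (hge : ∀ x ∈ m, a ≤ x)
    (hpre : ∀ k ≤ j, k ≤ m.countP (· < a + k)) (hj : m.countP (· < a + (j + 1)) ≤ j) :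
    IsBallot (m.filter (· < a + j)) a j ∧ ∀ x ∈ m.filter (fun x => ¬ x < a + j), a + j + 1 ≤ x := by
  have hsucc := countP_lt_add_one m (a + j)
  have hj' := hpre j le_rfl
  rw [← add_assoc] at hj
  have hcount : m.count (a + j) = 0 := by omega
  refine ⟨⟨?_, fun x hx => ?_, fun k hk => ?_⟩, fun x hx => ?_⟩
  · rw [← countP_eq_card_filter]; omega
  · exact ⟨hge x (mem_of_mem_filter hx), (mem_filter.1 hx).2⟩
  · have hkj : a + k ≤ a + j := by omega
    rw [countP_filter]
    convert hpre k hk using 2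
    exact ⟨And.left, fun h => ⟨h, lt_of_lt_of_le h hkj⟩⟩
  · obtain ⟨hxm, hxj⟩ := mem_filter.1 hx
    have hne : x ≠ a + j := fun he => count_eq_zero.1 hcount (he ▸ hxm)
    omega

namespace BT

lemma card_rhoMS (t : BT) (a : ℤ) : card (t.rhoMS a) = t.size := by
  induction t generalizing a with
  | leaf => rfl
  | node l r ihl ihr => simp [rhoMS, size, ihl, ihr]

lemma mem_rhoMS {t : BT} {a x : ℤ} (hx : x ∈ t.rhoMS a) : a ≤ x ∧ x < a + t.size := by
  induction t generalizing a with
  | leaf => simp [rhoMS] at hx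
  | node l r ihl ihr =>
    simp only [rhoMS, mem_cons, mem_add] at hx
    simp only [size, Nat.cast_add, Nat.cast_one]
    rcases hx with rfl | h | h
    · omega
    · have := ihl h; omega
    · have := ihr h; omega

lemma mem_rhoMS_self {t : BT} (ht : t ≠ leaf) (a : ℤ) : a ∈ t.rhoMS a := by
  cases t with
  | leaf => exact absurd rfl ht
  | node l r => exact mem_cons_self _ _

lemma countP_rhoMS_node (l r : BT) (a : ℤ) {k : ℕ} (hk : 1 ≤ k) :
    ((node l r).rhoMS a).countP (· < a + k) =
      (l.rhoMS a).countP (· < a + k) + (r.rhoMS (a + l.size + 1)).countP (· < a + k) + 1 := by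
  rw [rhoMS, countP_cons, countP_add, if_pos (by omega)]

lemma le_countP_rhoMS (t : BT) (a : ℤ) : ∀ k ≤ t.size, k ≤ (t.rhoMS a).countP (· < a + k) := by
  induction t generalizing a with
  | leaf => simp [size]
  | node l r ihl ihr =>
    intro k hk
    rcases Nat.eq_zero_or_pos k with rfl | hk1
    · exact Nat.zero_le _
    rw [countP_rhoMS_node l r a hk1]
    by_cases hkl : k ≤ l.size + 1
    · have := ihl a (k - 1) (by omega)
      have := countP_lt_mono (l.rhoMS a) (show a + ↑(k - 1) ≤ a + k by omega)
      omega
    · obtain ⟨j, rfl⟩ : ∃ j, k = l.size + 1 + j := ⟨k - (l.size + 1), by omega⟩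
      have hshift : a + ↑(l.size + 1 + j) = a + l.size + 1 + j := by push_cast; ring
      have hl : (l.rhoMS a).countP (· < a + l.size + 1 + j) = l.size := by
        rw [countP_eq_card.2 fun x hx => by have := mem_rhoMS hx; omega, card_rhoMS]
      have hr := ihr (a + l.size + 1) j (by simp only [size] at hk; omega)
      rw [hshift, hl]
      omega

lemma isBallot_rhoMS (t : BT) (a : ℤ) : IsBallot (t.rhoMS a) a t.size :=
  ⟨card_rhoMS t a, fun _ hx => mem_rhoMS hx, le_countP_rhoMS t a⟩

lemma isLeast_size_left (l r : BT) (a : ℤ) :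
    IsLeast {k : ℕ | ((node l r).rhoMS a).countP (· < a + (k + 1)) ≤ k + 1} l.size := by
  refine ⟨?_, fun k hk => ?_⟩
  · have hl : (l.rhoMS a).countP (· < a + (l.size + 1 : ℕ)) = l.size := by
      rw [countP_eq_card.2 fun x hx => by have := mem_rhoMS hx; omega, card_rhoMS]
    have hr : (r.rhoMS (a + l.size + 1)).countP (· < a + (l.size + 1 : ℕ)) = 0 :=
      countP_eq_zero.2 fun x hx => by have := mem_rhoMS hx; omega
    have := countP_rhoMS_node l r a (k := l.size + 1) (by omega)
    simp only [Set.mem_ofPred_eq]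
    push_cast at hl hr this
    omega
  · by_contra! hlt
    have := le_countP_rhoMS l a (k + 1) hlt
    have := countP_rhoMS_node l r a (k := k + 1) (by omega)
    simp only [Set.mem_ofPred_eq] at hk
    push_cast at *
    omega

lemma rhoMS_inj {t t' : BT} {a : ℤ} (h : t.rhoMS a = t'.rhoMS a) : t = t' := by
  induction t generalizing t' a with
  | leaf => cases t' with
    | leaf => rfl
    | node => simp [rhoMS] at h
  | node l r ihl ihr =>
    cases t' with
    | leaf => simp [rhoMS] at h
    | node l' r' =>
      have hsize : l.size = l'.size :=
        (isLeast_size_left l r a).unique (by rw [h]; exact isLeast_size_left l' r' a)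
      rw [rhoMS, rhoMS, cons_inj_right, ← hsize] at h
      have hsplit (u v : BT) (hu : u.size = l.size) :=
        filter_lt_add_of_lt_of_le (L := u.rhoMS a) (R := v.rhoMS (a + l.size + 1))
          (fun x hx => hu ▸ (mem_rhoMS hx).2) (fun x hx => by have := (mem_rhoMS hx).1; omega)
      obtain ⟨hl, hr⟩ := hsplit l r rfl
      obtain ⟨hl', hr'⟩ := hsplit l' r' hsize.symm
      rw [h] at hl hr
      rw [ihl (hl.symm.trans hl'), ihr (hr.symm.trans hr')]

end BT

/-- Remove the root's `ρ`-value `a` and cut at the first point where the ballot condition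
becomes tight. -/
lemma IsBallot.exists_split {m : Multiset ℤ} {a : ℤ} {n : ℕ} (hm : IsBallot m a (n + 1)) :
    ∃ (nl nr : ℕ) (ml mr : Multiset ℤ), nl + nr = n ∧ IsBallot ml a nl ∧
      IsBallot mr (a + nl + 1) nr ∧ m = a ::ₘ (ml + mr) := by
  obtain ⟨hcard, hmem, hpre⟩ := hm
  have ha : a ∈ m := by
    obtain ⟨x, hx, hxa⟩ := countP_pos.1 (hpre 1 (by omega))
    obtain rfl : x = a := by have := hmem x hx; omega
    exact hx
  set s := m.erase a
  have hms : m = a ::ₘ s := (cons_erase ha).symm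
  have hs (k : ℕ) (hk : 1 ≤ k) : m.countP (· < a + k) = s.countP (· < a + k) + 1 := by
    rw [hms, countP_cons, if_pos (by omega)]
  have hscard : card s = n := by rw [hms, card_cons] at hcard; omega
  have hex : ∃ k : ℕ, s.countP (· < a + (k + 1)) ≤ k := ⟨n, hscard ▸ countP_le_card _ _⟩
  set nl := Nat.find hex
  have hspre (k : ℕ) (hk : k ≤ nl) : k ≤ s.countP (· < a + k) := by
    rcases k with _ | k
    · exact Nat.zero_le _
    have := Nat.find_min hex (show k < nl by omega)
    push_cast
    omega
  obtain ⟨hml, hmr⟩ := isBallot_filter_of_countP_le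
    (fun x hx => (hmem x (mem_of_mem_erase hx)).1) hspre (Nat.find_spec hex)
  set ml := s.filter (· < a + nl)
  set mr := s.filter (fun x => ¬ x < a + nl)
  have hsplit : ml + mr = s := filter_add_not _ s
  have hnl : nl ≤ n := by have := congrArg card hsplit; rw [card_add, hml.1] at this; omega
  refine ⟨nl, n - nl, ml, mr, by omega, hml, ⟨?_, fun x hx => ⟨hmr x hx, ?_⟩, fun j hj => ?_⟩,
    by rw [hsplit]; exact hms⟩
  · have := congrArg card hsplit
    rw [card_add, hml.1] at this
    omega
  · have := (hmem x (mem_of_mem_erase (mem_of_mem_filter hx))).2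
    push_cast [hnl]
    omega
  · have hml_all : ml.countP (· < a + nl + 1 + j) = nl := by
      rw [countP_eq_card.2 fun x hx => by have := (hml.2.1 x hx).2; omega, hml.1]
    have hb : a + ((nl + 1 + j : ℕ) : ℤ) = a + nl + 1 + j := by push_cast; ring
    have h1 := hpre (nl + 1 + j) (by omega)
    have h2 := hs (nl + 1 + j) (by omega)
    rw [hb] at h1 h2
    rw [← hsplit, countP_add, hml_all] at h2
    omega

lemma IsBallot.exists_rhoMS_eq {m : Multiset ℤ} {a : ℤ} {n : ℕ} (hm : IsBallot m a n) :
    ∃ t : BT, t.size = n ∧ t.rhoMS a = m := by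
  induction n using Nat.strong_induction_on generalizing m a with
  | _ n ih =>
  rcases n with _ | n
  · exact ⟨.leaf, rfl, (card_eq_zero.1 hm.1).symm⟩
  obtain ⟨nl, nr, ml, mr, hn, hml, hmr, rfl⟩ := hm.exists_split
  obtain ⟨l, rfl, rfl⟩ := ih nl (by omega) hml
  obtain ⟨r, rfl, rfl⟩ := ih nr (by omega) hmr
  exact ⟨.node l r, by simp only [BT.size]; omega, rfl⟩

abbrev Separated (p q : ℤ × BT) : Prop := p.1 + (p.2.size : ℤ) + 1 ≤ q.1

instance : Trans Separated Separated Separated :=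
  ⟨fun hpq hqr => by simp only [Separated] at *; omega⟩

def forestRhoMS (ts : List (ℤ × BT)) : Multiset ℤ := (ts.map fun p => p.2.rhoMS p.1).sum

@[simp]
lemma forestRhoMS_nil : forestRhoMS [] = 0 := rfl

@[simp]
lemma forestRhoMS_cons (p : ℤ × BT) (ts : List (ℤ × BT)) :
    forestRhoMS (p :: ts) = p.2.rhoMS p.1 + forestRhoMS ts := by
  simp [forestRhoMS]

lemma mem_forestRhoMS {ts : List (ℤ × BT)} {x : ℤ} :
    x ∈ forestRhoMS ts ↔ ∃ p ∈ ts, x ∈ p.2.rhoMS p.1 := by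
  induction ts with
  | nil => simp
  | cons p ts ih => simp [ih]

section ForestCons

variable {a : ℤ} {t : BT} {rest : List (ℤ × BT)}

lemma le_of_mem_forestRhoMS_tail (h : ((a, t) :: rest).IsChain Separated) {x : ℤ}
    (hx : x ∈ forestRhoMS rest) : a + t.size + 1 ≤ x := by
  obtain ⟨q, hq, hxq⟩ := mem_forestRhoMS.1 hx
  have hsep : Separated (a, t) q :=
    (List.pairwise_cons.1 (List.isChain_iff_pairwise.1 h)).1 q hq
  exact hsep.trans (BT.mem_rhoMS hxq).1

lemma isLeast_forestRhoMS_cons (ht : t ≠ .leaf) (h : ((a, t) :: rest).IsChain Separated) :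
    IsLeast {x | x ∈ forestRhoMS ((a, t) :: rest)} a := by
  refine ⟨mem_add.2 (.inl (BT.mem_rhoMS_self ht a)), fun x hx => ?_⟩
  rcases mem_add.1 hx with hx | hx
  · exact (BT.mem_rhoMS hx).1
  · have := le_of_mem_forestRhoMS_tail h hx
    omega

lemma isLeast_size_head (h : ((a, t) :: rest).IsChain Separated) :
    IsLeast {k : ℕ | (forestRhoMS ((a, t) :: rest)).countP (· < a + (k + 1)) ≤ k} t.size := by
  have hrest (b : ℤ) (hb : b ≤ a + t.size + 1) : (forestRhoMS rest).countP (· < b) = 0 :=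
    countP_eq_zero.2 fun x hx => by have := le_of_mem_forestRhoMS_tail h hx; omega
  refine ⟨?_, fun k hk => ?_⟩
  · have ht : (t.rhoMS a).countP (· < a + (t.size + 1)) = t.size := by
      rw [countP_eq_card.2 fun x hx => by have := BT.mem_rhoMS hx; omega, BT.card_rhoMS]
    simp only [Set.mem_ofPred_eq, forestRhoMS_cons, countP_add, ht,
      hrest (a + (t.size + 1)) (by omega)]
    omega
  · by_contra! hlt
    have := BT.le_countP_rhoMS t a (k + 1) hlt
    simp only [Set.mem_ofPred_eq, forestRhoMS_cons, countP_add] at hk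
    push_cast at this
    omega

end ForestCons

lemma eq_of_forestRhoMS_eq {ts ts' : List (ℤ × BT)} (hts : ∀ p ∈ ts, p.2 ≠ .leaf)
    (hc : ts.IsChain Separated) (hts' : ∀ p ∈ ts', p.2 ≠ .leaf) (hc' : ts'.IsChain Separated)
    (h : forestRhoMS ts = forestRhoMS ts') : ts = ts' := by
  induction ts generalizing ts' with
  | nil =>
    cases ts' with
    | nil => rfl
    | cons p ts' =>
      have := h ▸ mem_forestRhoMS.2 ⟨p, List.mem_cons_self, BT.mem_rhoMS_self (hts' p (by simp)) _⟩
      simp at this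
  | cons p ts ih =>
    cases ts' with
    | nil =>
      have := h ▸ mem_forestRhoMS.2 ⟨p, List.mem_cons_self, BT.mem_rhoMS_self (hts p (by simp)) _⟩
      simp at this
    | cons p' ts' =>
      obtain ⟨a, t⟩ := p
      obtain ⟨a', t'⟩ := p'
      have hmin' := isLeast_forestRhoMS_cons (hts' (a', t') List.mem_cons_self) hc'
      rw [← h] at hmin'
      obtain rfl : a = a' :=
        (isLeast_forestRhoMS_cons (hts (a, t) List.mem_cons_self) hc).unique hmin'
      have hsize' := isLeast_size_head hc'
      rw [← h] at hsize'
      have hsize : t.size = t'.size := (isLeast_size_head hc).unique hsize'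
      have hsplit (u : BT) (us : List (ℤ × BT)) (hu : u.size = t.size)
          (huc : ((a, u) :: us).IsChain Separated) :=
        filter_lt_add_of_lt_of_le (L := u.rhoMS a) (R := forestRhoMS us) (b := a + t.size)
          (fun x hx => hu ▸ (BT.mem_rhoMS hx).2)
          (fun x hx => by have := le_of_mem_forestRhoMS_tail huc hx; omega)
      obtain ⟨ht, hrest⟩ := hsplit t ts rfl hc
      obtain ⟨ht', hrest'⟩ := hsplit t' ts' hsize.symm hc'
      simp only [forestRhoMS_cons] at h
      rw [h] at ht hrest
      rw [BT.rhoMS_inj (ht.symm.trans ht'), ih (fun q hq => hts q (.tail _ hq))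
        (List.isChain_cons.1 hc).2 (fun q hq => hts' q (.tail _ hq)) (List.isChain_cons.1 hc').2
        (hrest.symm.trans hrest')]

lemma exists_forestRhoMS_eq (M : Multiset ℤ) :
    ∃ ts : List (ℤ × BT), (∀ p ∈ ts, p.2 ≠ .leaf) ∧ ts.IsChain Separated ∧ forestRhoMS ts = M := by
  induction hN : card M using Nat.strong_induction_on generalizing M with
  | _ N ih =>
  rcases eq_or_ne M 0 with rfl | hM0
  · exact ⟨[], by simp, .nil, rfl⟩
  obtain ⟨a, haM, hamin⟩ : ∃ a ∈ M, ∀ x ∈ M, a ≤ x := exists_min_image id hM0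
  have hex : ∃ k : ℕ, M.countP (· < a + (k + 1)) ≤ k := ⟨card M, countP_le_card _ _⟩
  set n := Nat.find hex
  have hpre (k : ℕ) (hk : k ≤ n) : k ≤ M.countP (· < a + k) := by
    rcases k with _ | k
    · exact Nat.zero_le _
    have := Nat.find_min hex (show k < n by omega)
    push_cast
    omega
  have hn : 0 < n := (Nat.find_pos hex).2 fun h0 => by
    have := countP_pos_of_mem (p := (· < a + ((0 : ℕ) + 1))) haM (by omega)
    omega
  obtain ⟨hml, hmr⟩ := isBallot_filter_of_countP_le hamin hpre (Nat.find_spec hex)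
  obtain ⟨t, ht, htM⟩ := hml.exists_rhoMS_eq
  have hcard : card (M.filter fun x => ¬ x < a + n) < N := by
    have := congrArg card (filter_add_not (· < a + n) M)
    rw [card_add, hml.1] at this
    omega
  obtain ⟨rest, hrest, hc, hrM⟩ := ih _ hcard _ rfl
  refine ⟨(a, t) :: rest, ?_, List.isChain_cons.2 ⟨fun q hq => ?_, hc⟩, ?_⟩
  · rintro q (_ | ⟨_, hq⟩)
    · rintro (hleaf : t = .leaf)
      simp only [hleaf, BT.size] at ht
      omega
    · exact hrest q hq
  · have hq' := List.mem_of_mem_head? hq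
    have := hmr q.1 (hrM ▸ mem_forestRhoMS.2 ⟨q, hq', BT.mem_rhoMS_self (hrest q hq') _⟩)
    simp only [Separated, ht]
    omega
  · rw [forestRhoMS_cons, htM, hrM, filter_add_not]

namespace IndexedForest

lemma rhoMS_injective : Function.Injective IndexedForest.rhoMS := by
  rintro ⟨ts, hts, hc⟩ ⟨ts', hts', hc'⟩ h
  obtain rfl := eq_of_forestRhoMS_eq hts hc hts' hc' h
  rfl

lemma exists_rhoMS_eq (M : Multiset ℤ) : ∃ F : IndexedForest, F.rhoMS = M := by
  obtain ⟨ts, hts, hc, hM⟩ := exists_forestRhoMS_eq M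
  exact ⟨⟨ts, hts, hc⟩, hM⟩

lemma mem_supp_of_mem_rhoMS {F : IndexedForest} {i : ℤ} (hi : i ∈ F.rhoMS) : i ∈ F.Supp := by
  obtain ⟨p, hp, hip⟩ := mem_forestRhoMS.1 hi
  exact ⟨p, hp, BT.mem_rhoMS hip⟩

lemma exists_mem_rhoMS_le_of_mem_supp {F : IndexedForest} {i : ℤ} (hi : i ∈ F.Supp) :
    ∃ x ∈ F.rhoMS, x ≤ i := by
  obtain ⟨p, hp, hpi, -⟩ := hi
  exact ⟨p.1, mem_forestRhoMS.2 ⟨p, hp, BT.mem_rhoMS_self (F.nonempty p hp) _⟩, hpi⟩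

end IndexedForest

/-- Indexed forests with positive support are in bijection with
finitely supported `ℕ`-vectors supported on the positive integers, via
`F ↦ c(F)`. We state that `c(F)` is always such a vector, and that every such
vector arises from a unique positively supported indexed forest. -/
theorem forests_biject_with_nvectors :
    (∀ F : IndexedForest, (∀ i ∈ F.Supp, 1 ≤ i) →
        ({i : ℤ | cOf F i ≠ 0}.Finite ∧ ∀ i : ℤ, i ≤ 0 → cOf F i = 0)) ∧
    (∀ c : ℤ → ℕ, {i : ℤ | c i ≠ 0}.Finite → (∀ i : ℤ, i ≤ 0 → c i = 0) →
        ∃! F : IndexedForest, (∀ i ∈ F.Supp, 1 ≤ i) ∧ cOf F = c) := by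
  refine ⟨fun F hpos => ⟨?_, fun i hi => ?_⟩, fun c hfin hzero => ?_⟩
  · exact F.rhoMS.toFinset.finite_toSet.subset fun i hi => mem_toFinset.2 (count_ne_zero.1 hi)
  · exact count_eq_zero.2 fun hmem => by linarith [hpos i (F.mem_supp_of_mem_rhoMS hmem)]
  set M := Finsupp.toMultiset (Finsupp.ofSupportFinite c hfin)
  have hcOf (F : IndexedForest) : cOf F = c ↔ F.rhoMS = M := by
    rw [Multiset.ext, funext_iff]
    simp only [cOf, M, Finsupp.count_toMultiset]
    rfl
  obtain ⟨F, hF⟩ := IndexedForest.exists_rhoMS_eq M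
  refine ⟨F, ⟨fun i hi => ?_, (hcOf F).2 hF⟩,
    fun F' hF' => IndexedForest.rhoMS_injective (((hcOf F').1 hF'.2).trans hF.symm)⟩
  obtain ⟨x, hx, hxi⟩ := F.exists_mem_rhoMS_le_of_mem_supp hi
  have hcx : c x ≠ 0 := (hcOf F).2 hF ▸ count_ne_zero.2 hx
  by_contra! hi0
  exact hcx (hzero x (by omega))
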